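/- The set {α₁−α₂, α₂−α₃, 3(α₃−α₄), 4(α₄−α₅), …, (l−2)(α_{l−2}−α_{l−1}), γ_{l−1}, γ_l} is a Z-basis of the lattice D = E + Zγ₃ + ⋯ + Zγ_l. -/

import Mathlib

/-! In the paper's 1-indexed notation, pair the `i`-th vector of the family with the coordinate
functional `α_{i+1}^*` for `i < l`, and the last one, `γ_l`, with the coordinate sum. The vectors
`c(α_j - α_{j+1})` and `γ_{l-1}` are killed by every later functional (the coordinate sum
vanishes on all of them), while the diagonal pairings are `-c`, `-(l-1)` and `l`; so the pairing
matrix is upper triangular with nonzero determinant, and the family is linearly independent.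

For the span, `γ_r - γ_{r-1} = r(α_r - α_{r+1})` and `γ_2 = (α₁ - α₂) + 2(α₂ - α₃) ∈ E`, so the
middle vectors are differences of consecutive `γ`'s and, conversely, each `γ_r` is `γ_2` plus
a telescoping sum of them. -/

/-- The standard basis vector `α_i` (0-indexed) of `L = ℤ^l`. -/
def al (l : ℕ) (i : ℕ) : Fin l → ℤ := fun j => if (j : ℕ) = i then 1 else 0

/-- `γ_r = α₁ + ⋯ + α_r - r·α_{r+1}` for `r ≤ l-1`, and `γ_l = α₁ + ⋯ + α_l`. -/
def ga (l r : ℕ) : Fin l → ℤ :=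
  fun j => if (j : ℕ) < r then 1 else if (j : ℕ) = r then -(r : ℤ) else 0

/-- `D = E + ℤγ₃ + ⋯ + ℤγ_l` where `E = ℤ(α₁-α₂) + ℤ(α₂-α₃)`. -/
def D (l : ℕ) : Submodule ℤ (Fin l → ℤ) :=
  Submodule.span ℤ ({al l 0 - al l 1, al l 1 - al l 2} ∪
    {x | ∃ r : ℕ, 3 ≤ r ∧ r ≤ l ∧ x = ga l r})

/-- The family `α₁-α₂, α₂-α₃, 3(α₃-α₄), …, (l-2)(α_{l-2}-α_{l-1}), γ_{l-1}, γ_l`,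
indexed by `Fin l` (with the entry of index `i`, `2 ≤ i ≤ l-3`, equal to
`(i+1)(α_{i+1} - α_{i+2}) = (i+1) • (al l i - al l (i+1))` in 1-indexed notation). -/
def bvec (l : ℕ) (i : Fin l) : Fin l → ℤ :=
  if (i : ℕ) = 0 then al l 0 - al l 1
  else if (i : ℕ) = 1 then al l 1 - al l 2
  else if (i : ℕ) ≤ l - 3 then ((i : ℕ) + 1 : ℤ) • (al l i - al l ((i : ℕ) + 1))
  else if (i : ℕ) = l - 2 then ga l (l - 1)
  else ga l l

theorem linearIndependent_of_isUpperTriangular {R M ι : Type*} [CommRing R] [IsDomain R]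
    [AddCommGroup M] [Module R M] [Fintype ι] [LinearOrder ι] (v : ι → M)
    (φ : ι → Module.Dual R M) (h : (Matrix.of fun i j => φ i (v j)).IsUpperTriangular)
    (h_diag : ∀ i, φ i (v i) ≠ 0) : LinearIndependent R v := by
  have hdet : (Matrix.of fun i j => φ i (v j)).det ≠ 0 := by
    rw [Matrix.det_of_isUpperTriangular h]
    exact Finset.prod_ne_zero_iff.mpr fun i _ => h_diag i
  exact (Matrix.linearIndependent_cols_of_det_ne_zero hdet).of_comp (LinearMap.pi φ)

lemma ga_zero (l : ℕ) : ga l 0 = 0 := by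
  funext j
  simp [ga]

lemma ga_succ (l r : ℕ) : ga l (r + 1) = ga l r + ((r : ℤ) + 1) • (al l r - al l (r + 1)) := by
  funext j
  simp only [ga, al, Pi.add_apply, Pi.smul_apply, Pi.sub_apply, smul_eq_mul]
  split_ifs <;> push_cast <;> omega

lemma ga_two (l : ℕ) : ga l 2 = (al l 0 - al l 1) + (2 : ℤ) • (al l 1 - al l 2) := by
  rw [ga_succ, ga_succ, ga_zero]
  norm_num

def coordSum (l : ℕ) : Module.Dual ℤ (Fin l → ℤ) := ∑ k : Fin l, LinearMap.proj k

@[simp]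
lemma coordSum_apply (l : ℕ) (x : Fin l → ℤ) : coordSum l x = ∑ k, x k := by
  simp [coordSum]

lemma coordSum_al (l i : ℕ) : coordSum l (al l i) = if i < l then 1 else 0 := by
  simp only [coordSum_apply, al]
  rw [Fin.sum_univ_eq_sum_range (fun k => if k = i then (1 : ℤ) else 0) l, Finset.sum_ite_eq']
  simp only [Finset.mem_range]

lemma coordSum_al_sub_al_succ {l i : ℕ} (h : i + 1 < l) :
    coordSum l (al l i - al l (i + 1)) = 0 := by
  rw [map_sub, coordSum_al, coordSum_al, if_pos (by omega), if_pos h, sub_self]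

lemma coordSum_ga_of_lt {l r : ℕ} (h : r < l) : coordSum l (ga l r) = 0 := by
  induction r with
  | zero => rw [ga_zero, map_zero]
  | succ r ih =>
    rw [ga_succ, map_add, map_smul, ih (by omega), coordSum_al_sub_al_succ h, smul_zero,
      add_zero]

lemma coordSum_ga_self {l : ℕ} (hl : 1 ≤ l) : coordSum l (ga l l) = l := by
  obtain ⟨n, rfl⟩ : ∃ n, l = n + 1 := ⟨l - 1, by omega⟩
  rw [ga_succ, map_add, map_smul, coordSum_ga_of_lt (by omega), map_sub, coordSum_al, coordSum_al,
    if_pos (by omega), if_neg (by omega)]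
  simp

lemma bvec_zero {l : ℕ} (h : 0 < l) : bvec l ⟨0, h⟩ = al l 0 - al l 1 := by
  simp [bvec]

lemma bvec_one {l : ℕ} (h : 1 < l) : bvec l ⟨1, h⟩ = al l 1 - al l 2 := by
  simp [bvec]

lemma bvec_eq_ga_succ_sub_ga {l : ℕ} {i : Fin l} (h2 : 2 ≤ (i : ℕ)) (h : (i : ℕ) < l - 2) :
    bvec l i = ga l (i + 1) - ga l i := by
  rw [bvec, if_neg (by omega), if_neg (by omega), if_pos (by omega), ga_succ]
  abel

lemma bvec_eq_ga_succ {l : ℕ} (hl : 4 ≤ l) {i : Fin l} (h : l - 2 ≤ (i : ℕ)) :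
    bvec l i = ga l (i + 1) := by
  rw [bvec, if_neg (by omega), if_neg (by omega), if_neg (by omega)]
  split_ifs with h'
  · rw [h', show l - 2 + 1 = l - 1 by omega]
  · rw [show (i : ℕ) + 1 = l by omega]

lemma exists_bvec_eq_smul {l : ℕ} {i : Fin l} (h : (i : ℕ) < l - 2) :
    ∃ c : ℤ, c ≠ 0 ∧ bvec l i = c • (al l i - al l (i + 1)) := by
  rcases (by omega : (i : ℕ) = 0 ∨ (i : ℕ) = 1 ∨ 2 ≤ (i : ℕ)) with h0 | h1 | h2
  · exact ⟨1, one_ne_zero, by rw [bvec, if_pos h0, h0, one_smul]⟩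
  · exact ⟨1, one_ne_zero, by rw [bvec, if_neg (by omega), if_pos h1, h1, one_smul]⟩
  · refine ⟨(i : ℤ) + 1, by omega, ?_⟩
    rw [bvec, if_neg (by omega), if_neg (by omega), if_pos (by omega)]

def bvecDual (l : ℕ) (i : Fin l) : Module.Dual ℤ (Fin l → ℤ) :=
  if h : (i : ℕ) + 1 < l then LinearMap.proj ⟨i + 1, h⟩ else coordSum l

lemma bvecDual_bvec_of_lt {l : ℕ} (hl : 4 ≤ l) {i j : Fin l} (hji : j < i) :
    bvecDual l i (bvec l j) = 0 := by
  have hji' : (j : ℕ) < i := hji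
  have hj : (j : ℕ) ≤ l - 2 := by omega
  rw [bvecDual]
  split_ifs with hi
  · obtain ⟨c, -, hc⟩ := exists_bvec_eq_smul (i := j) (by omega)
    simp only [hc, LinearMap.coe_proj, Function.eval, Pi.smul_apply, Pi.sub_apply, al]
    rw [if_neg (by omega), if_neg (by omega), sub_self, smul_zero]
  · rcases hj.lt_or_eq with hj | hj
    · obtain ⟨c, -, hc⟩ := exists_bvec_eq_smul (i := j) hj
      rw [hc, map_smul, coordSum_al_sub_al_succ (by omega), smul_zero]
    · rw [bvec_eq_ga_succ hl hj.ge, coordSum_ga_of_lt (by omega)]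

lemma bvecDual_bvec_self_ne_zero {l : ℕ} (hl : 4 ≤ l) (i : Fin l) :
    bvecDual l i (bvec l i) ≠ 0 := by
  rw [bvecDual]
  split_ifs with hi
  · rcases (by omega : (i : ℕ) < l - 2 ∨ (i : ℕ) = l - 2) with hi' | hi'
    · obtain ⟨c, hc0, hc⟩ := exists_bvec_eq_smul hi'
      simpa [hc, al] using hc0
    · rw [bvec_eq_ga_succ hl hi'.ge]
      simp only [LinearMap.coe_proj, Function.eval, ga, lt_irrefl, if_false, if_true]
      omega
  · rw [bvec_eq_ga_succ hl (by omega), show (i : ℕ) + 1 = l by omega,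
      coordSum_ga_self (by omega)]
    omega

theorem linearIndependent_bvec {l : ℕ} (hl : 4 ≤ l) : LinearIndependent ℤ (bvec l) :=
  linearIndependent_of_isUpperTriangular (bvec l) (bvecDual l)
    (fun _ _ hji => bvecDual_bvec_of_lt hl hji) (bvecDual_bvec_self_ne_zero hl)

lemma al_zero_sub_al_one_mem_D (l : ℕ) : al l 0 - al l 1 ∈ D l :=
  Submodule.subset_span (Or.inl (Set.mem_insert _ _))

lemma al_one_sub_al_two_mem_D (l : ℕ) : al l 1 - al l 2 ∈ D l :=
  Submodule.subset_span (Or.inl (Set.mem_insert_of_mem _ rfl))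

lemma ga_mem_D {l r : ℕ} (h2 : 2 ≤ r) (hr : r ≤ l) : ga l r ∈ D l := by
  rcases h2.eq_or_lt with rfl | h3
  · rw [ga_two]
    exact add_mem (al_zero_sub_al_one_mem_D l)
      (Submodule.smul_mem _ _ (al_one_sub_al_two_mem_D l))
  · exact Submodule.subset_span (Or.inr ⟨r, h3, hr, rfl⟩)

lemma ga_mem_span_bvec {l r : ℕ} (hl : 4 ≤ l) (h2 : 2 ≤ r) (hr : r ≤ l) :
    ga l r ∈ Submodule.span ℤ (Set.range (bvec l)) := by
  induction r, h2 using Nat.le_induction with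
  | base =>
    rw [ga_two, ← bvec_zero (by omega), ← bvec_one (by omega)]
    exact add_mem (Submodule.subset_span ⟨_, rfl⟩)
      (Submodule.smul_mem _ _ (Submodule.subset_span ⟨_, rfl⟩))
  | succ r h2 ih =>
    rcases lt_or_ge r (l - 2) with hr' | hr'
    · rw [← sub_add_cancel (ga l (r + 1)) (ga l r),
        ← bvec_eq_ga_succ_sub_ga (i := ⟨r, by omega⟩) h2 hr']
      exact add_mem (Submodule.subset_span ⟨_, rfl⟩) (ih (by omega))
    · rw [← bvec_eq_ga_succ hl (i := ⟨r, by omega⟩) hr']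
      exact Submodule.subset_span ⟨_, rfl⟩

theorem span_range_bvec {l : ℕ} (hl : 4 ≤ l) :
    Submodule.span ℤ (Set.range (bvec l)) = D l := by
  apply le_antisymm
  · rw [Submodule.span_le]
    rintro _ ⟨i, rfl⟩
    rcases (by omega : (i : ℕ) = 0 ∨ (i : ℕ) = 1 ∨ (2 ≤ (i : ℕ) ∧ (i : ℕ) < l - 2) ∨
        l - 2 ≤ (i : ℕ)) with h | h | ⟨h2, h⟩ | h
    · rw [show i = ⟨0, by omega⟩ from Fin.ext h, bvec_zero]
      exact al_zero_sub_al_one_mem_D l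
    · rw [show i = ⟨1, by omega⟩ from Fin.ext h, bvec_one]
      exact al_one_sub_al_two_mem_D l
    · rw [bvec_eq_ga_succ_sub_ga h2 h]
      exact sub_mem (ga_mem_D (by omega) (by omega)) (ga_mem_D h2 (by omega))
    · rw [bvec_eq_ga_succ hl h]
      exact ga_mem_D (by omega) (by omega)
  · rw [D, Submodule.span_le]
    rintro _ ((rfl | rfl) | ⟨r, h3, hr, rfl⟩)
    · rw [← bvec_zero (by omega)]
      exact Submodule.subset_span ⟨_, rfl⟩
    · rw [← bvec_one (by omega)]
      exact Submodule.subset_span ⟨_, rfl⟩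
    · exact ga_mem_span_bvec hl (by omega) hr

/-- The set `{α₁-α₂, α₂-α₃, 3(α₃-α₄), …, (l-2)(α_{l-2}-α_{l-1}), γ_{l-1}, γ_l}`
is a `ℤ`-basis of the lattice `D`. -/
theorem stmt8 (l : ℕ) (hl : 4 ≤ l) :
    LinearIndependent ℤ (bvec l) ∧
    Submodule.span ℤ (Set.range (bvec l)) = D l :=
  ⟨linearIndependent_bvec hl, span_range_bvec hl⟩
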